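/- arXiv:2007.01701 — 2 statements merged into one kernel-verified Lean document; each statement's English description precedes it below -/
import Mathlib

section
/- Let A be a positive bounded operator on H, and let T, S, R be bounded operators where T and S are A-positive. The 2×2 block operator [[T, R^{♯_A}], [R, S]] on H ⊕ H is 𝐀-positive (where 𝐀 = diag(A,A)) if and only if |⟨Rx,y⟩_A|² ≤ ⟨Tx,x⟩_A · ⟨Sy,y⟩_A for all x, y ∈ H. -/
open scoped ComplexOrder

noncomputable def normA {H : Type*} [NormedAddCommGroup H] [InnerProductSpace ℂ H]
    (A : H →L[ℂ] H) (x : H) : ℝ := Real.sqrt ((inner ℂ (A x) x : ℂ)).re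

noncomputable def wA {H : Type*} [NormedAddCommGroup H] [InnerProductSpace ℂ H]
    (A T : H →L[ℂ] H) : ℝ :=
  sSup ((fun x => ‖(inner ℂ (A (T x)) x : ℂ)‖) '' {x : H | normA A x = 1})

noncomputable def opA {H : Type*} [NormedAddCommGroup H] [InnerProductSpace ℂ H]
    (A S : H →L[ℂ] H) : ℝ :=
  sSup ((fun x => normA A (S x)) '' {x : H | normA A x = 1})

noncomputable def wpA {H : Type*} [NormedAddCommGroup H] [InnerProductSpace ℂ H]
    {n : ℕ} (A : H →L[ℂ] H) (p : ℝ) (T : Fin n → H →L[ℂ] H) : ℝ :=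
  sSup ((fun x => (∑ i, ‖(inner ℂ (A (T i x)) x : ℂ)‖ ^ p) ^ (1/p)) '' {x : H | normA A x = 1})
/-!
Since `A Rs = R* A` and `A` is self-adjoint, `⟪A Rs y, x⟫` is the conjugate of `⟪A R x, y⟫`, so the
block form at `(x, y)` is the real number `⟪ATx, x⟫ + 2 Re ⟪ARx, y⟫ + ⟪ASy, y⟫`. Replacing `y` by
`c • y` turns this into a quadratic form in the scalar `c`, which is nonnegative for all `c` exactly
when the Cauchy–Schwarz-type bound `|⟪ARx, y⟫|² ≤ ⟪ATx, x⟫ ⟪ASy, y⟫` holds.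
-/

open RCLike ContinuousLinearMap
open scoped ComplexConjugate

section Scalar

variable {𝕜 : Type*} [RCLike 𝕜]

theorem add_two_mul_re_add_nonneg_of_sq_norm_le {t s : ℝ} {z : 𝕜} (ht : 0 ≤ t) (hs : 0 ≤ s)
    (h : ‖z‖ ^ 2 ≤ t * s) : 0 ≤ t + 2 * re z + s := by
  have hz : 2 * ‖z‖ ≤ t + s :=
    abs_le_of_sq_le_sq' (by nlinarith [sq_nonneg (t - s)]) (by positivity) |>.2
  linarith [neg_abs_le (re z), abs_re_le_norm z]

theorem sq_norm_le_mul_iff_forall_nonneg {t s : ℝ} (z : 𝕜) (ht : 0 ≤ t) (hs : 0 ≤ s) :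
    ‖z‖ ^ 2 ≤ t * s ↔ ∀ c : 𝕜, 0 ≤ t + 2 * re (c * z) + ‖c‖ ^ 2 * s := by
  refine ⟨fun h c => add_two_mul_re_add_nonneg_of_sq_norm_le ht (by positivity) ?_, fun h => ?_⟩
  · rw [norm_mul, mul_pow]
    nlinarith [sq_nonneg ‖c‖]
  · -- along `c = -r * conj z` the form is a real quadratic in `r`, so its discriminant is `≤ 0`
    have quad : ∀ r : ℝ, 0 ≤ (‖z‖ ^ 2 * s) * (r * r) + (-2 * ‖z‖ ^ 2) * r + t := by
      intro r
      have := h (-(r : 𝕜) * conj z)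
      rw [mul_assoc, RCLike.conj_mul, norm_mul, norm_neg, norm_conj, norm_ofReal] at this
      simp only [neg_mul, map_neg, re_ofReal_mul, ← ofReal_pow, ofReal_re] at this
      rw [mul_pow, sq_abs] at this
      linarith
    have hd := discrim_le_zero quad
    rw [discrim] at hd
    rcases (sq_nonneg ‖z‖).eq_or_lt with h0 | hpos
    · rw [← h0]; positivity
    · nlinarith

end Scalar

section Operator

variable {𝕜 E : Type*} [RCLike 𝕜] [NormedAddCommGroup E] [InnerProductSpace 𝕜 E]

local notation "⟪" x ", " y "⟫" => inner 𝕜 x y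

theorem ofReal_re_inner_mul_apply_self {A T : E →L[𝕜] E} (h : (A * T).IsPositive) (x : E) :
    ((re ⟪A (T x), x⟫ : ℝ) : 𝕜) = ⟪A (T x), x⟫ :=
  h.isSymmetric.coe_re_inner_apply_self x

theorem re_inner_map_smul_smul (B : E →L[𝕜] E) (c : 𝕜) (y : E) :
    re ⟪B (c • y), c • y⟫ = ‖c‖ ^ 2 * re ⟪B y, y⟫ := by
  rw [map_smul, inner_smul_left, inner_smul_right, ← mul_assoc, RCLike.conj_mul, ← ofReal_pow,
    re_ofReal_mul]

variable [CompleteSpace E] {A R Rs : E →L[𝕜] E}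

theorem inner_apply_eq_conj_of_mul_eq_adjoint_mul (hA : IsSelfAdjoint A)
    (hRs : A * Rs = adjoint R * A) (x y : E) : ⟪A (Rs y), x⟫ = conj ⟪A (R x), y⟫ :=
  calc ⟪A (Rs y), x⟫ = ⟪adjoint R (A y), x⟫ :=
      congrArg (⟪·, x⟫) (DFunLike.congr_fun hRs y)
    _ = ⟪y, A (R x)⟫ := by rw [adjoint_inner_left]; exact hA.isSymmetric y (R x)
    _ = conj ⟪A (R x), y⟫ := (inner_conj_symm _ _).symm

theorem inner_block_eq_ofReal (hA : IsSelfAdjoint A) (hRs : A * Rs = adjoint R * A)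
    {T S : E →L[𝕜] E} (hT : (A * T).IsPositive) (hS : (A * S).IsPositive) (x y : E) :
    ⟪A (T x + Rs y), x⟫ + ⟪A (R x + S y), y⟫ =
      ((re ⟪A (T x), x⟫ + 2 * re ⟪A (R x), y⟫ + re ⟪A (S y), y⟫ : ℝ) : 𝕜) := by
  rw [map_add, map_add, inner_add_left, inner_add_left,
    inner_apply_eq_conj_of_mul_eq_adjoint_mul hA hRs, ← ofReal_re_inner_mul_apply_self hT,
    ← ofReal_re_inner_mul_apply_self hS]
  push_cast
  linear_combination add_conj ⟪A (R x), y⟫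

end Operator

theorem block_A_positive_iff_general {H : Type*} [NormedAddCommGroup H] [InnerProductSpace ℂ H]
    [CompleteSpace H] (A T S R Rs : H →L[ℂ] H)
    (hA : A.IsPositive) (hT : (A * T).IsPositive) (hS : (A * S).IsPositive)
    (hRs : A * Rs = ContinuousLinearMap.adjoint R * A) :
    (∀ x y : H, 0 ≤ (inner ℂ (A (T x + Rs y)) x + inner ℂ (A (R x + S y)) y : ℂ)) ↔
    (∀ x y : H, ‖(inner ℂ (A (R x)) y : ℂ)‖ ^ 2 ≤
      ((inner ℂ (A (T x)) x : ℂ)).re * ((inner ℂ (A (S y)) y : ℂ)).re) := by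
  simp only [inner_block_eq_ofReal hA.isSelfAdjoint hRs hT hS, ofReal_nonneg]
  have hT₀ (x : H) : 0 ≤ re (inner ℂ (A (T x)) x) := hT.re_inner_nonneg_left x
  have hS₀ (y : H) : 0 ≤ re (inner ℂ (A (S y)) y) := hS.re_inner_nonneg_left y
  refine ⟨fun h x y => (sq_norm_le_mul_iff_forall_nonneg _ (hT₀ x) (hS₀ y)).2 fun c => ?_,
    fun h x y => add_two_mul_re_add_nonneg_of_sq_norm_le (hT₀ x) (hS₀ y) (h x y)⟩
  have hc := h x (c • y)
  rwa [inner_smul_right, show A (S (c • y)) = (A * S) (c • y) from rfl,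
    re_inner_map_smul_smul] at hc

theorem block_A_positive_iff {H : Type*} [NormedAddCommGroup H] [InnerProductSpace ℂ H]
    [CompleteSpace H] (A T S R Rs : H →L[ℂ] H)
    (hA : A.IsPositive) (hT : (A * T).IsPositive) (hS : (A * S).IsPositive)
    (hRs : A * Rs = ContinuousLinearMap.adjoint R * A)
    (hRsRange : Set.range Rs ⊆ closure (Set.range A)) :
    (∀ x y : H, 0 ≤ (inner ℂ (A (T x + Rs y)) x + inner ℂ (A (R x + S y)) y : ℂ)) ↔
    (∀ x y : H, ‖(inner ℂ (A (R x)) y : ℂ)‖ ^ 2 ≤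
      ((inner ℂ (A (T x)) x : ℂ)).re * ((inner ℂ (A (S y)) y : ℂ)).re) :=
  block_A_positive_iff_general A T S R Rs hA hT hS hRs
end

section
/- Let A be a positive bounded operator on H, and let T ∈ B_A(H) commute with A (AT = TA). Then |T^{♯_A}|_A² T = T |T|_A², and consequently T |T|_A = |T^{♯_A}|_A T, where |T|_A = (A T^{♯_A} T)^{1/2} and |T^{♯_A}|_A = (A (T^{♯_A})^{♯_A} T^{♯_A})^{1/2}. -/
open scoped ComplexOrder

/-! Since `A` is self-adjoint, taking adjoints in `A T♯ = T* A` gives `(T♯)* A = A T`; hence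
`|T♯|² T = A T♯♯ T♯ T = (T♯)* A T♯ T = A T T♯ T = T |T|²`, the last step by `A T = T A`.
Square roots of positive operators inherit the intertwining `P² X = X Q²`: on `H ⊕ H` the
operator `[[0, X], [0, 0]]` commutes with `diag(P, Q)²`, hence with its square root `diag(P, Q)`. -/

theorem IsSelfAdjoint.star_mul_eq_mul_of_mul_eq_star_mul {R : Type*} [Monoid R] [StarMul R]
    {a s t : R} (ha : IsSelfAdjoint a) (h : a * s = star t * a) : star s * a = a * t := by
  simpa [star_mul, ha.star_eq] using congrArg star h

section

variable {A : Type*} [PartialOrder A] [Ring A] [StarRing A] [TopologicalSpace A] [Algebra ℝ A]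
  [ContinuousFunctionalCalculus ℝ A IsSelfAdjoint] [IsTopologicalRing A] [T2Space A]
  [NonnegSpectrumClass ℝ A] [StarOrderedRing A]

theorem Commute.of_sq_right {a b : A} (ha : 0 ≤ a) (h : Commute b (a ^ 2)) : Commute b a := by
  have h_sqrt := (h.symm.cfc_nnreal NNReal.sqrt).symm
  rwa [← CFC.sqrt_eq_cfc, CFC.sqrt_sq a] at h_sqrt

end

namespace ContinuousLinearMap

variable {𝕜 E F : Type*} [RCLike 𝕜] [NormedAddCommGroup E] [InnerProductSpace 𝕜 E]
  [NormedAddCommGroup F] [InnerProductSpace 𝕜 F]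

def blockDiag (P : E →L[𝕜] E) (Q : F →L[𝕜] F) : WithLp 2 (E × F) →L[𝕜] WithLp 2 (E × F) :=
  (WithLp.prodContinuousLinearEquiv 2 𝕜 E F).symm.toContinuousLinearMap ∘L P.prodMap Q ∘L
    (WithLp.prodContinuousLinearEquiv 2 𝕜 E F).toContinuousLinearMap

def upperRight (X : F →L[𝕜] E) : WithLp 2 (E × F) →L[𝕜] WithLp 2 (E × F) :=
  (WithLp.prodContinuousLinearEquiv 2 𝕜 E F).symm.toContinuousLinearMap ∘L
    (X ∘L snd 𝕜 E F).prod 0 ∘L (WithLp.prodContinuousLinearEquiv 2 𝕜 E F).toContinuousLinearMap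

@[simp]
theorem blockDiag_apply (P : E →L[𝕜] E) (Q : F →L[𝕜] F) (x : WithLp 2 (E × F)) :
    blockDiag P Q x = WithLp.toLp 2 (P x.fst, Q x.snd) := rfl

@[simp]
theorem upperRight_apply (X : F →L[𝕜] E) (x : WithLp 2 (E × F)) :
    upperRight X x = WithLp.toLp 2 (X x.snd, 0) := rfl

theorem blockDiag_comp_blockDiag (P P' : E →L[𝕜] E) (Q Q' : F →L[𝕜] F) :
    blockDiag P Q ∘L blockDiag P' Q' = blockDiag (P ∘L P') (Q ∘L Q') := by
  ext x : 1
  simp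

theorem blockDiag_comp_upperRight (P : E →L[𝕜] E) (Q : F →L[𝕜] F) (X : F →L[𝕜] E) :
    blockDiag P Q ∘L upperRight X = upperRight (P ∘L X) := by
  ext x : 1
  simp

theorem upperRight_comp_blockDiag (X : F →L[𝕜] E) (P : E →L[𝕜] E) (Q : F →L[𝕜] F) :
    upperRight X ∘L blockDiag P Q = upperRight (X ∘L Q) := by
  ext x : 1
  simp

theorem upperRight_injective : Function.Injective (upperRight : (F →L[𝕜] E) → _) := by
  intro X Y h
  ext y
  simpa using congrArg (fun S => (S (WithLp.toLp 2 (0, y))).fst) h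

theorem isPositive_blockDiag {P : E →L[𝕜] E} {Q : F →L[𝕜] F} (hP : P.IsPositive)
    (hQ : Q.IsPositive) : (blockDiag P Q).IsPositive := by
  rw [isPositive_iff]
  refine ⟨fun x y => ?_, fun x => ?_⟩
  · simp [hP.inner_left_eq_inner_right, hQ.inner_left_eq_inner_right]
  · simpa using add_nonneg (hP.inner_nonneg_left x.fst) (hQ.inner_nonneg_left x.snd)

theorem IsPositive.mul_eq_mul_of_sq_mul_eq_mul_sq {H : Type*} [NormedAddCommGroup H]
    [InnerProductSpace ℂ H] [CompleteSpace H] {P Q X : H →L[ℂ] H}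
    (hP : P.IsPositive) (hQ : Q.IsPositive) (h : P ^ 2 * X = X * Q ^ 2) : P * X = X * Q := by
  have hsq : blockDiag P Q ^ 2 = blockDiag (P ^ 2) (Q ^ 2) := by
    simp only [sq, mul_def, blockDiag_comp_blockDiag]
  have hcomm_sq : Commute (upperRight X) (blockDiag P Q ^ 2) := by
    rw [Commute, SemiconjBy, hsq, mul_def, mul_def, upperRight_comp_blockDiag,
      blockDiag_comp_upperRight, ← mul_def, ← mul_def, h]
  have hcomm := hcomm_sq.of_sq_right ((nonneg_iff_isPositive _).mpr (isPositive_blockDiag hP hQ))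
  simp only [Commute, SemiconjBy, mul_def, upperRight_comp_blockDiag,
    blockDiag_comp_upperRight] at hcomm
  exact upperRight_injective hcomm.symm

end ContinuousLinearMap

theorem absA_commutation_general {H : Type*} [NormedAddCommGroup H] [InnerProductSpace ℂ H]
    [CompleteSpace H] (A T Ts Tss absT absTs : H →L[ℂ] H)
    (hA : A.IsPositive) (hcomm : A * T = T * A)
    (hTs : A * Ts = ContinuousLinearMap.adjoint T * A)
    (hTss : A * Tss = ContinuousLinearMap.adjoint Ts * A)
    (habsT : absT.IsPositive) (habsT2 : absT * absT = A * Ts * T)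
    (habsTs : absTs.IsPositive) (habsTs2 : absTs * absTs = A * Tss * Ts) :
    absTs ^ 2 * T = T * absT ^ 2 ∧ T * absT = absTs * T := by
  have hTsA : ContinuousLinearMap.adjoint Ts * A = A * T :=
    hA.isSelfAdjoint.star_mul_eq_mul_of_mul_eq_star_mul hTs
  have hsq : absTs ^ 2 * T = T * absT ^ 2 :=
    calc absTs ^ 2 * T = ContinuousLinearMap.adjoint Ts * A * Ts * T := by rw [sq, habsTs2, hTss]
      _ = T * (A * Ts * T) := by rw [hTsA, hcomm]; simp only [mul_assoc]
      _ = T * absT ^ 2 := by rw [sq, habsT2]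
  exact ⟨hsq, (habsTs.mul_eq_mul_of_sq_mul_eq_mul_sq habsT hsq).symm⟩

theorem absA_commutation {H : Type*} [NormedAddCommGroup H] [InnerProductSpace ℂ H]
    [CompleteSpace H] (A T Ts Tss absT absTs : H →L[ℂ] H)
    (hA : A.IsPositive) (hcomm : A * T = T * A)
    (hTs : A * Ts = ContinuousLinearMap.adjoint T * A)
    (hTsRange : Set.range Ts ⊆ closure (Set.range A))
    (hTss : A * Tss = ContinuousLinearMap.adjoint Ts * A)
    (hTssRange : Set.range Tss ⊆ closure (Set.range A))
    (habsT : absT.IsPositive) (habsT2 : absT * absT = A * Ts * T)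
    (habsTs : absTs.IsPositive) (habsTs2 : absTs * absTs = A * Tss * Ts) :
    absTs ^ 2 * T = T * absT ^ 2 ∧ T * absT = absTs * T :=
  absA_commutation_general A T Ts Tss absT absTs hA hcomm hTs hTss habsT habsT2 habsTs habsTs2
end
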